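/- Let G be a temporal graph with n ≥ 2 vertices and connected underlying graph, and let F be the weight of a minimum-weight spanning tree of the underlying graph where each edge e is weighted by its frequency f_e. If the lifetime T is at least 2F, then from any starting vertex there exists a temporal walk exploring G of length at most 2F. -/

import Mathlib

/-- A temporal graph on vertex type `V`: timesteps `1, …, T`, with `active t e`
meaning the undirected edge `e` is active at timestep `t`. -/
structure TemporalGraph (V : Type) where
  T : ℕ
  active : ℕ → Sym2 V → Prop

namespace TemporalGraph

variable {V : Type}

/-- Edge `e` has frequency at most `f`: it is active at least once in every
window of `f` consecutive timesteps within `[1, T]`. -/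
def FreqLE (G : TemporalGraph V) (e : Sym2 V) (f : ℕ) : Prop :=
  0 < f ∧ ∀ t, 1 ≤ t → t + f ≤ G.T + 1 → ∃ s ∈ Finset.Ico t (t + f), G.active s e

/-- The frequency of an edge: the least `f` such that `e` is active at least
once in every `f` consecutive timesteps. -/
noncomputable def freq (G : TemporalGraph V) (e : Sym2 V) : ℕ :=
  sInf {f | G.FreqLE e f}

/-- Edge `e` is `r`-regular. -/
def Regular (G : TemporalGraph V) (e : Sym2 V) (r : ℕ) : Prop :=
  0 < r ∧ ∀ t, r + 1 ≤ t → t + r ≤ G.T →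
    ((G.active (t - r) e ↔ G.active t e) ∧ (G.active t e ↔ G.active (t + r) e))

/-- The underlying (static) graph of a temporal graph. -/
def underlying (G : TemporalGraph V) : SimpleGraph V where
  Adj u v := u ≠ v ∧ ∃ t ∈ Finset.Icc 1 G.T, G.active t s(u, v)
  symm := ⟨by
    intro u v h
    refine ⟨h.1.symm, ?_⟩
    rw [Sym2.eq_swap]
    exact h.2⟩
  loopless := ⟨fun v h => h.1 rfl⟩

/-- A temporal walk starting at `start`, given by vertices `vs 0, …, vs m` and
strictly increasing timesteps `ts 0 < … < ts (m-1)`, each step using an edge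
active at its timestep. -/
structure TWalk (G : TemporalGraph V) (start : V) where
  m : ℕ
  vs : Fin (m + 1) → V
  ts : Fin m → ℕ
  start_eq : vs 0 = start
  mono : StrictMono ts
  time_ge : ∀ i, 1 ≤ ts i
  time_le : ∀ i, ts i ≤ G.T
  steps : ∀ i : Fin m, G.active (ts i) s(vs i.castSucc, vs i.succ)

/-- A temporal walk explores the graph if every vertex is visited. -/
def TWalk.Explores {G : TemporalGraph V} {start : V} (w : G.TWalk start) : Prop :=
  Function.Surjective w.vs

/-- The length of a temporal walk: its final timestep. -/
def TWalk.length {G : TemporalGraph V} {start : V} (w : G.TWalk start) : ℕ :=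
  Finset.univ.sup w.ts

end TemporalGraph

/-!
Double the edges of a minimum spanning tree: the resulting closed walk from `v` visits every vertex
and crosses each tree edge at most twice, so its frequency weight is at most `2F`. It is realized
in time greedily: consecutive windows of lengths `f_{e_1}, f_{e_2}, …` fill `[1, W]` with
`W ≤ 2F ≤ T`, and by definition of frequency the `i`-th edge `e_i` is active somewhere in the
`i`-th window.
-/

theorem List.sum_map_le_nsmul_finsum_of_count_le {α M : Type*} [DecidableEq α]
    [AddCommMonoid M] [PartialOrder M] [IsOrderedAddMonoid M] [CanonicallyOrderedAdd M]
    {l : List α} {s : Set α} (hs : s.Finite) {k : ℕ} (hl : ∀ a ∈ l, a ∈ s)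
    (hcount : ∀ a, l.count a ≤ k) (f : α → M) :
    (l.map f).sum ≤ k • ∑ᶠ a ∈ s, f a := by
  rw [Finset.sum_list_map_count, finsum_mem_eq_finite_toFinset_sum _ hs, Finset.smul_sum]
  calc ∑ a ∈ l.toFinset, l.count a • f a ≤ ∑ a ∈ l.toFinset, k • f a :=
        Finset.sum_le_sum fun a _ => nsmul_le_nsmul_left zero_le (hcount a)
    _ ≤ ∑ a ∈ hs.toFinset, k • f a :=
        Finset.sum_le_sum_of_subset fun a ha => by simpa using hl a (List.mem_toFinset.mp ha)

namespace SimpleGraph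

variable {V : Type*}

theorem Reachable.deleteEdges_or {G : SimpleGraph V} {v w u : V} (h : G.Reachable v u) :
    (G.deleteEdges {s(v, w)}).Reachable v u ∨ (G.deleteEdges {s(v, w)}).Reachable w u := by
  rw [reachable_iff_reflTransGen] at h
  induction h with
  | refl => exact .inl .rfl
  | @tail b c _ hbc ih =>
    by_cases he : s(b, c) = s(v, w)
    · rcases Sym2.eq_iff.mp he with ⟨-, rfl⟩ | ⟨-, rfl⟩
      · exact .inr .rfl
      · exact .inl .rfl
    · have hbc' : (G.deleteEdges {s(v, w)}).Adj b c := deleteEdges_adj.mpr ⟨hbc, he⟩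
      exact ih.imp (·.trans hbc'.reachable) (·.trans hbc'.reachable)

theorem Walk.reachable_of_mem_edges {G : SimpleGraph V} {u v x : V} (p : G.Walk u v) {e : Sym2 V}
    (he : e ∈ p.edges) (hx : x ∈ e) : G.Reachable u x := by
  classical exact ⟨p.takeUntil x (p.mem_support_of_mem_edges he hx)⟩

theorem IsAcyclic.exists_walk_support_reachable_count_edges_le_two [Finite V] [DecidableEq V]
    {G : SimpleGraph V} (hG : G.IsAcyclic) (v : V) :
    ∃ p : G.Walk v v,
      (∀ u, G.Reachable v u → u ∈ p.support) ∧ ∀ e, p.edges.count e ≤ 2 := by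
  by_cases hv : ∃ w, G.Adj v w
  swap
  · refine ⟨.nil, fun u ⟨q⟩ => ?_, by simp⟩
    cases q with
    | nil => simp
    | cons h _ => exact absurd ⟨_, h⟩ hv
  obtain ⟨w, hvw⟩ := hv
  set G' := G.deleteEdges {s(v, w)}
  have hG'G : G' ≤ G := deleteEdges_le _
  -- every edge of an acyclic graph is a bridge, so the tours of its two sides are edge-disjoint
  have hbridge : ¬ G'.Reachable v w := isAcyclic_iff_forall_adj_isBridge.mp hG hvw
  obtain ⟨p, hpv, hpc⟩ :=
    (hG.anti hG'G).exists_walk_support_reachable_count_edges_le_two v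
  obtain ⟨q, hqw, hqc⟩ :=
    (hG.anti hG'G).exists_walk_support_reachable_count_edges_le_two w
  refine ⟨.cons hvw ((q.mapLe hG'G).append (.cons hvw.symm (p.mapLe hG'G))), ?_, fun e => ?_⟩
  · intro u hu
    rcases hu.deleteEdges_or (w := w) with h | h
    · simp [Walk.support_append, hpv u h]
    · simp [Walk.support_append, hqw u h]
  · have hnot : ∀ {a b : V} (r : G'.Walk a b), s(v, w) ∉ r.edges := fun r h => by
      simpa [G'] using r.edges_subset_edgeSet h
    simp only [Walk.edges_cons, Walk.edges_append, Walk.edges_mapLe_eq_edges,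
      Sym2.eq_swap (a := w), List.count_cons, List.count_append, beq_iff_eq]
    by_cases he : e = s(v, w)
    · subst he
      simp [List.count_eq_zero.mpr (hnot p), List.count_eq_zero.mpr (hnot q)]
    · have hdisj : e ∉ p.edges ∨ e ∉ q.edges := by
        by_contra! h
        exact hbridge ((p.reachable_of_mem_edges h.1 e.out_fst_mem).trans
          (q.reachable_of_mem_edges h.2 e.out_fst_mem).symm)
      have := hpc e
      have := hqc e
      rcases hdisj with h | h <;> simp [List.count_eq_zero.mpr h, Ne.symm he] <;> omega
termination_by G.edgeSet.ncard
decreasing_by all_goals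
  rw [edgeSet_deleteEdges]
  exact Set.ncard_sdiff_singleton_lt_of_mem hvw (Set.toFinite _)

theorem Walk.sum_map_edges_eq_sum_range {M : Type*} [AddCommMonoid M] {G : SimpleGraph V} {a b : V}
    (p : G.Walk a b) (f : Sym2 V → M) :
    (p.edges.map f).sum = ∑ i ∈ Finset.range p.length, f s(p.getVert i, p.getVert (i + 1)) := by
  have hedges : p.edges = List.ofFn fun i : Fin p.length => s(p.getVert i, p.getVert (i + 1)) :=
    List.ext_getElem (by simp) fun i _ _ => by simp [Walk.getElem_edges]
  rw [hedges, List.map_ofFn, List.sum_ofFn]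
  exact Fin.sum_univ_eq_sum_range (fun i => f s(p.getVert i, p.getVert (i + 1))) _

end SimpleGraph

open SimpleGraph

namespace TemporalGraph

variable {V : Type}

theorem freqLE_freq_of_mem_edgeSet (G : TemporalGraph V) {e : Sym2 V}
    (he : e ∈ G.underlying.edgeSet) : G.FreqLE e (G.freq e) := by
  refine Set.mem_ofPred.mp (Nat.sInf_mem ⟨G.T, ?_⟩)
  induction e using Sym2.ind with
  | _ x y =>
    obtain ⟨t, ht, hact⟩ := he.2
    rw [Finset.mem_Icc] at ht
    exact ⟨by omega, fun t' _ _ => ⟨t, Finset.mem_Ico.mpr ⟨by omega, by omega⟩, hact⟩⟩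

theorem exists_tWalk_of_walk (G : TemporalGraph V) {a b : V} (p : G.underlying.Walk a b)
    (hp : (p.edges.map G.freq).sum ≤ G.T) :
    ∃ w : G.TWalk a, (∀ u ∈ p.support, u ∈ Set.range w.vs) ∧
      w.length ≤ (p.edges.map G.freq).sum := by
  set f := fun i => G.freq s(p.getVert i, p.getVert (i + 1))
  set S := fun k => ∑ i ∈ Finset.range k, f i
  have hS : (p.edges.map G.freq).sum = S p.length := p.sum_map_edges_eq_sum_range _
  have hSmono : Monotone S := fun k l hkl => Finset.sum_le_sum_of_subset (by simpa)
  have hSsucc : ∀ k, S (k + 1) = S k + f k := fun k => Finset.sum_range_succ _ _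
  have hwindow : ∀ i : Fin p.length, ∃ s ∈ Finset.Ico (S i + 1) (S i + 1 + f i),
      G.active s s(p.getVert i, p.getVert (i + 1)) := by
    intro i
    have := hSsucc i
    have := hSmono (show (i : ℕ) + 1 ≤ p.length from i.2)
    exact (G.freqLE_freq_of_mem_edgeSet (p.adj_getVert_succ i.2)).2 _ (by omega)
      (show S i + 1 + f i ≤ G.T + 1 by omega)
  choose τ hτ hact using hwindow
  have hτ_le : ∀ i : Fin p.length, τ i ≤ S (i + 1) := fun i => by
    have := Finset.mem_Ico.mp (hτ i)
    have := hSsucc i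
    omega
  have hτ_le_sum : ∀ i, τ i ≤ (p.edges.map G.freq).sum := fun i =>
    hS ▸ (hτ_le i).trans (hSmono i.2)
  refine ⟨⟨p.length, fun i => p.getVert i, τ, by simp, fun i j hij => ?_, fun i => ?_,
    fun i => ?_, fun i => by simpa using hact i⟩, fun u hu => ?_, ?_⟩
  · calc τ i ≤ S (i + 1) := hτ_le i
      _ ≤ S j := hSmono hij
      _ < τ j := (Finset.mem_Ico.mp (hτ j)).1
  · exact le_trans (by omega) (Finset.mem_Ico.mp (hτ i)).1
  · exact (hτ_le_sum i).trans hp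
  · obtain ⟨n, rfl, hn⟩ := Walk.mem_support_iff_exists_getVert.mp hu
    exact ⟨⟨n, Nat.lt_succ_of_le hn⟩, rfl⟩
  · exact Finset.sup_le fun i _ => hτ_le_sum i

end TemporalGraph

theorem explore_mst_bound_general {V : Type} [Fintype V] (G : TemporalGraph V) (F : ℕ)
    (hF : IsLeast {w : ℕ | ∃ T' : SimpleGraph V, T' ≤ G.underlying ∧ T'.IsTree ∧
      w = ∑ᶠ e ∈ T'.edgeSet, G.freq e} F)
    (hT : 2 * F ≤ G.T) (v : V) :
    ∃ w : G.TWalk v, w.Explores ∧ w.length ≤ 2 * F := by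
  classical
  obtain ⟨⟨T', hle, htree, rfl⟩, -⟩ := hF
  obtain ⟨p, hp_support, hp_count⟩ :=
    htree.isAcyclic.exists_walk_support_reachable_count_edges_le_two v
  have hweight :
      ((p.mapLe hle).edges.map G.freq).sum ≤ 2 * ∑ᶠ e ∈ T'.edgeSet, G.freq e := by
    rw [Walk.edges_mapLe_eq_edges]
    exact List.sum_map_le_nsmul_finsum_of_count_le (Set.toFinite _)
      (fun e he => p.edges_subset_edgeSet he) hp_count _
  obtain ⟨w, hw_support, hw_length⟩ :=
    G.exists_tWalk_of_walk (p.mapLe hle) (hweight.trans hT)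
  refine ⟨w, fun u => hw_support u ?_, hw_length.trans hweight⟩
  rw [Walk.support_mapLe_eq_support]
  exact hp_support u (htree.connected.preconnected v u)

/-- if `F` is the weight of a minimum-weight spanning tree of the
underlying graph, with each edge weighted by its frequency, and `T ≥ 2F`, then
from any starting vertex there is an exploring temporal walk of length at most
`2F`. -/
theorem explore_mst_bound {V : Type} [Fintype V] (G : TemporalGraph V) (F : ℕ)
    (h2 : 2 ≤ Fintype.card V)
    (hconn : G.underlying.Connected)
    (hF : IsLeast {w : ℕ | ∃ T' : SimpleGraph V, T' ≤ G.underlying ∧ T'.IsTree ∧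
      w = ∑ᶠ e ∈ T'.edgeSet, G.freq e} F)
    (hT : 2 * F ≤ G.T) (v : V) :
    ∃ w : G.TWalk v, w.Explores ∧ w.length ≤ 2 * F :=
  explore_mst_bound_general G F hF hT v
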